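/- Let n ≥ 2 be an integer and p an integer with 1 ≤ p ≤ n−1, and let Ψ(y) = [[2y−1, 1],[1, 2y−1]]. For every twice differentiable P : (0,1) → ℂ² and every y ∈ (0,1): y(1−y)(ΨP)″(y) + (n/2)(1−2y)(ΨP)′(y) + (((1−2y)²+1)/(4y(1−y)))·diag(p−n, −p)·(ΨP)(y) + ((1−2y)/(2y(1−y)))·[[0, p−n],[−p, 0]]·(ΨP)(y) = Ψ(y)·[ y(1−y)P″(y) − [[(n/2+1)(2y−1), −1],[−1, (n/2+1)(2y−1)]]·P′(y) − diag(p, n−p)·P(y) ]. Consequently, since Ψ(y) is invertible for y ∈ (0,1), for any λ ∈ ℂ the function H = ΨP satisfies the left-hand operator equation with eigenvalue λ if and only if y(1−y)P″ − [[(n/2+1)(2y−1), −1],[−1, (n/2+1)(2y−1)]]P′ − diag(p, n−p)P = λP on (0,1). -/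

import Mathlib

namespace Stmt14

/-- `Ψ(y) = [[2y-1, 1], [1, 2y-1]]`. -/
noncomputable def Psi2 (y : ℝ) : Matrix (Fin 2) (Fin 2) ℂ :=
  !![2*(y:ℂ)-1, 1; 1, 2*(y:ℂ)-1]

/-- The left-hand side operator
`y(1-y)H'' + (n/2)(1-2y)H' + (((1-2y)²+1)/(4y(1-y))) diag(p-n,-p) H
  + ((1-2y)/(2y(1-y))) [[0,p-n],[-p,0]] H`. -/
noncomputable def lhsOp (n p : ℕ) (H : ℝ → Fin 2 → ℂ) (y : ℝ) : Fin 2 → ℂ :=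
  ((y:ℂ) * (1 - (y:ℂ))) • deriv (deriv H) y
    + ((n:ℂ)/2 * (1 - 2*(y:ℂ))) • deriv H y
    + (((1 - 2*(y:ℂ))^2 + 1) / (4*(y:ℂ)*(1 - (y:ℂ)))) •
        (Matrix.diagonal ![(p:ℂ) - (n:ℂ), -(p:ℂ)]).mulVec (H y)
    + ((1 - 2*(y:ℂ)) / (2*(y:ℂ)*(1 - (y:ℂ)))) •
        (!![0, (p:ℂ) - (n:ℂ); -(p:ℂ), 0]).mulVec (H y)

/-- The conjugated (hypergeometric) operator
`y(1-y)P'' - [[(n/2+1)(2y-1),-1],[-1,(n/2+1)(2y-1)]]P' - diag(p, n-p) P`. -/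
noncomputable def rhsOp (n p : ℕ) (P : ℝ → Fin 2 → ℂ) (y : ℝ) : Fin 2 → ℂ :=
  ((y:ℂ) * (1 - (y:ℂ))) • deriv (deriv P) y
    - (!![((n:ℂ)/2 + 1)*(2*(y:ℂ)-1), -1; -1, ((n:ℂ)/2 + 1)*(2*(y:ℂ)-1)]).mulVec (deriv P y)
    - (Matrix.diagonal ![(p:ℂ), (n:ℂ) - (p:ℂ)]).mulVec (P y)

open Matrix Filter Topology

/-! Since `Ψ(y) = (2y - 1) I + σ` with `σ` the swap matrix, `(ΨP)' = 2P + ΨP'` and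
`(ΨP)'' = 4P' + ΨP''`. Substituting these, the operator identity becomes, coordinatewise, a
rational identity in `y` with poles only at `0` and `1`. As `det Ψ(y) = 4y(y - 1)` does not
vanish on `(0, 1)`, the eigenvalue equations for `H = ΨP` and for `P` are equivalent. -/

theorem HasDerivAt.const_mulVec {𝕜 𝔸 m n : Type*} [NontriviallyNormedField 𝕜] [NormedRing 𝔸]
    [NormedAlgebra 𝕜 𝔸] [Fintype m] [Fintype n] (A : Matrix m n 𝔸) {f : 𝕜 → n → 𝔸}
    {f' : n → 𝔸} {x : 𝕜} (hf : HasDerivAt f f' x) :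
    HasDerivAt (fun t => A *ᵥ f t) (A *ᵥ f') x := by
  rw [hasDerivAt_pi]
  intro i
  simpa [mulVec, dotProduct] using
    HasDerivAt.fun_sum fun j _ => (hasDerivAt_pi.1 hf j).const_mul (A i j)

theorem Psi2_mulVec (y : ℝ) (v : Fin 2 → ℂ) :
    Psi2 y *ᵥ v = (2 * (y:ℂ) - 1) • v + !![0, 1; 1, 0] *ᵥ v := by
  ext i
  fin_cases i
  · simp [Psi2, mulVec, dotProduct]
  · simp only [Psi2, mulVec, dotProduct, Fin.sum_univ_two, of_apply, cons_val', cons_val_fin_one,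
      Fin.mk_one, Fin.isValue, cons_val_zero, cons_val_one, Pi.add_apply, Pi.smul_apply,
      smul_eq_mul]
    ring

theorem HasDerivAt.Psi2_mulVec {f : ℝ → Fin 2 → ℂ} {f' : Fin 2 → ℂ} {y : ℝ}
    (hf : HasDerivAt f f' y) :
    HasDerivAt (fun t => Psi2 t *ᵥ f t) ((2:ℂ) • f y + Psi2 y *ᵥ f') y := by
  have hc : HasDerivAt (fun t : ℝ => 2 * (t:ℂ) - 1) 2 y := by
    simpa using ((hasDerivAt_id y).ofReal_comp.const_mul 2).sub_const 1
  simp only [Stmt14.Psi2_mulVec]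
  refine ((hc.smul hf).add (HasDerivAt.const_mulVec !![0, 1; 1, 0] hf)).congr_deriv ?_
  abel

theorem det_Psi2 (y : ℝ) : (Psi2 y).det = 4 * y * (y - 1) := by
  rw [Psi2, det_fin_two_of]
  ring

theorem Psi2_mulVec_injective {y : ℝ} (hy0 : y ≠ 0) (hy1 : y ≠ 1) :
    Function.Injective (Psi2 y).mulVec := by
  refine mulVec_injective_iff_isUnit.2 ((isUnit_iff_isUnit_det _).2 ?_)
  rw [det_Psi2, isUnit_iff_ne_zero]
  have : (y:ℂ) - 1 ≠ 0 := sub_ne_zero.2 (mod_cast hy1)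
  exact mul_ne_zero (mul_ne_zero (by norm_num) (mod_cast hy0)) this

theorem Psi2_intertwining (n p : ℕ) {y : ℝ} (hy0 : y ≠ 0) (hy1 : y ≠ 1)
    (v v' v'' : Fin 2 → ℂ) :
    ((y:ℂ) * (1 - (y:ℂ))) • ((4:ℂ) • v' + Psi2 y *ᵥ v'')
      + ((n:ℂ)/2 * (1 - 2*(y:ℂ))) • ((2:ℂ) • v + Psi2 y *ᵥ v')
      + (((1 - 2*(y:ℂ))^2 + 1) / (4*(y:ℂ)*(1 - (y:ℂ)))) •
          diagonal ![(p:ℂ) - (n:ℂ), -(p:ℂ)] *ᵥ (Psi2 y *ᵥ v)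
      + ((1 - 2*(y:ℂ)) / (2*(y:ℂ)*(1 - (y:ℂ)))) •
          !![0, (p:ℂ) - (n:ℂ); -(p:ℂ), 0] *ᵥ (Psi2 y *ᵥ v)
    = Psi2 y *ᵥ (((y:ℂ) * (1 - (y:ℂ))) • v''
      - !![((n:ℂ)/2 + 1)*(2*(y:ℂ)-1), -1; -1, ((n:ℂ)/2 + 1)*(2*(y:ℂ)-1)] *ᵥ v'
      - diagonal ![(p:ℂ), (n:ℂ) - (p:ℂ)] *ᵥ v) := by
  have hy0' : (y:ℂ) ≠ 0 := mod_cast hy0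
  have hy1' : 1 - (y:ℂ) ≠ 0 := sub_ne_zero.2 (mod_cast hy1.symm)
  ext i
  fin_cases i <;>
  · simp only [Psi2, mulVec, dotProduct, Fin.sum_univ_two, of_apply, cons_val', cons_val_fin_one,
      Fin.zero_eta, Fin.mk_one, Fin.isValue, cons_val_zero, cons_val_one, diagonal_apply_eq,
      diagonal_apply_ne, ne_eq, zero_ne_one, one_ne_zero, not_false_eq_true, Pi.add_apply,
      Pi.sub_apply, Pi.smul_apply, smul_eq_mul]
    field_simp
    ring

theorem lhsOp_Psi2_mulVec (n p : ℕ) {P : ℝ → Fin 2 → ℂ} {y : ℝ} (hy0 : y ≠ 0) (hy1 : y ≠ 1)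
    (hP : ∀ᶠ z in 𝓝 y, DifferentiableAt ℝ P z) (hP' : DifferentiableAt ℝ (deriv P) y) :
    lhsOp n p (fun t => Psi2 t *ᵥ P t) y = Psi2 y *ᵥ rhsOp n p P y := by
  have hD : deriv (fun t => Psi2 t *ᵥ P t) =ᶠ[𝓝 y] fun z => (2:ℂ) • P z + Psi2 z *ᵥ deriv P z :=
    hP.mono fun z hz => (HasDerivAt.Psi2_mulVec hz.hasDerivAt).deriv
  have hD2 : deriv (deriv fun t => Psi2 t *ᵥ P t) y
      = (4:ℂ) • deriv P y + Psi2 y *ᵥ deriv (deriv P) y := by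
    rw [hD.deriv_eq]
    refine ((hP.self_of_nhds.hasDerivAt.const_smul (2:ℂ)).add
      (HasDerivAt.Psi2_mulVec hP'.hasDerivAt)).deriv.trans ?_
    module
  rw [lhsOp, hD2, hD.eq_of_nhds, rhsOp]
  exact Psi2_intertwining n p hy0 hy1 _ _ _

theorem hypergeometrization_general (n p : ℕ)
    (P : ℝ → Fin 2 → ℂ)
    (hP : ∀ y ∈ Set.Ioo (0:ℝ) 1, DifferentiableAt ℝ P y)
    (hP' : ∀ y ∈ Set.Ioo (0:ℝ) 1, DifferentiableAt ℝ (deriv P) y)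
    (H : ℝ → Fin 2 → ℂ) (hH : ∀ y, H y = (Psi2 y).mulVec (P y)) :
    (∀ y ∈ Set.Ioo (0:ℝ) 1, lhsOp n p H y = (Psi2 y).mulVec (rhsOp n p P y)) ∧
    ∀ lam : ℂ,
      ((∀ y ∈ Set.Ioo (0:ℝ) 1, lhsOp n p H y = lam • H y) ↔
        (∀ y ∈ Set.Ioo (0:ℝ) 1, rhsOp n p P y = lam • P y)) := by
  obtain rfl : H = fun t => Psi2 t *ᵥ P t := funext hH
  have conj : ∀ y ∈ Set.Ioo (0:ℝ) 1, lhsOp n p _ y = Psi2 y *ᵥ rhsOp n p P y :=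
    fun y hy => lhsOp_Psi2_mulVec n p hy.1.ne' hy.2.ne
      (eventually_of_mem (isOpen_Ioo.mem_nhds hy) hP) (hP' y hy)
  refine ⟨conj, fun lam => ⟨fun h y hy => ?_, fun h y hy => ?_⟩⟩
  · apply Psi2_mulVec_injective hy.1.ne' hy.2.ne
    rw [← conj y hy, h y hy, mulVec_smul]
  · rw [conj y hy, h y hy, mulVec_smul]

/-- Hypergeometrization of the spherical function equation for fundamental
`K`-types: the identity of operators under `H = ΨP`, and the resulting eigenvalue
equivalence. -/
theorem hypergeometrization (n p : ℕ) (hn : 2 ≤ n) (hp1 : 1 ≤ p) (hp2 : p ≤ n - 1)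
    (P : ℝ → Fin 2 → ℂ)
    (hP : ∀ y ∈ Set.Ioo (0:ℝ) 1, DifferentiableAt ℝ P y)
    (hP' : ∀ y ∈ Set.Ioo (0:ℝ) 1, DifferentiableAt ℝ (deriv P) y)
    (H : ℝ → Fin 2 → ℂ) (hH : ∀ y, H y = (Psi2 y).mulVec (P y)) :
    (∀ y ∈ Set.Ioo (0:ℝ) 1, lhsOp n p H y = (Psi2 y).mulVec (rhsOp n p P y)) ∧
    ∀ lam : ℂ,
      ((∀ y ∈ Set.Ioo (0:ℝ) 1, lhsOp n p H y = lam • H y) ↔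
        (∀ y ∈ Set.Ioo (0:ℝ) 1, rhsOp n p P y = lam • P y)) :=
  hypergeometrization_general n p P hP hP' H hH

end Stmt14
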